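/- arXiv:1905.13602 — 2 statements merged into one kernel-verified Lean document; each statement's English description precedes it below -/
import Mathlib

section
/- Let k be a real number and let g : (0,∞) → ℂ be twice differentiable with g″(r) + g′(r)/r + k²·g(r) = 0 for all r > 0. Define G : ℝ∖{0} → ℂ by G(t) = g(|t|) and ω(t) = √(1−t²). Then for all x, y in (−1,1) with x ≠ y, writing F(x,y) = G(x−y), one has ω(y)·∂_y(ω(y)·∂_y F(x,y)) − ω(x)·∂_x(ω(x)·∂_x F(x,y)) = k²·(y² − x²)·G(x−y). (This kernel identity is the heart of the commutation S_{k,ω}[−(ω∂ₓ)² − k²ω²] = [−(ω∂ₓ)² − k²ω²]S_{k,ω} for the weighted Helmholtz single-layer operator.) -/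
open Real Set Filter Topology

/-! In any variable, `(ω∂)²u = (1 - s²) u'' - s u'`. Off the diagonal, `t ↦ g |t - c|` has first
derivative `sign (t - c) • g'(|t - c|)` and second derivative `g''(|t - c|)`, so with `r = |x - y|`
the two `u''` terms combine to `(x² - y²) g''(r)` and the two `u'` terms, via
`sign (x - y) * r = x - y`, to `(x² - y²) g'(r) / r`; the Bessel equation turns the sum into
`k² (y² - x²) g(r)`. -/

lemma hasDerivAt_sqrt_one_sub_sq {y : ℝ} (hy : 0 < 1 - y ^ 2) :
    HasDerivAt (fun s : ℝ => √(1 - s ^ 2)) (-y / √(1 - y ^ 2)) y := by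
  have hsq : HasDerivAt (fun s : ℝ => 1 - s ^ 2) (-(2 * y)) y := by
    simpa using (hasDerivAt_pow 2 y).const_sub 1
  refine ((hasDerivAt_sqrt hy.ne').comp y hsq).congr_deriv ?_
  have : √(1 - y ^ 2) ≠ 0 := (sqrt_pos.2 hy).ne'
  field_simp

lemma sqrt_mul_deriv_sqrt_mul_deriv_of_eventuallyEq {u v : ℝ → ℂ} {y : ℝ} {v' : ℂ}
    (hy : y ∈ Ioo (-1 : ℝ) 1) (huv : deriv u =ᶠ[𝓝 y] v) (hv : HasDerivAt v v' y) :
    (√(1 - y ^ 2) : ℂ) * deriv (fun s => (√(1 - s ^ 2) : ℂ) * deriv u s) y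
      = (1 - (y : ℂ) ^ 2) * v' - y * v y := by
  have h1 : 0 < 1 - y ^ 2 := by nlinarith [hy.1, hy.2]
  have hprod := ((hasDerivAt_sqrt_one_sub_sq h1).ofReal_comp.mul hv).congr_of_eventuallyEq
    (huv.mono fun s hs => congrArg (fun d => (√(1 - s ^ 2) : ℂ) * d) hs)
  rw [hprod.deriv]
  have hsq : (√(1 - y ^ 2) : ℂ) ^ 2 = 1 - (y : ℂ) ^ 2 := by
    rw [← Complex.ofReal_pow, sq_sqrt h1.le]; push_cast; ring
  have hcancel : (√(1 - y ^ 2) : ℂ) * ((-y / √(1 - y ^ 2) : ℝ) : ℂ) = -y := by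
    have : (√(1 - y ^ 2) : ℂ) ≠ 0 := by exact_mod_cast (sqrt_pos.2 h1).ne'
    push_cast
    field_simp
  linear_combination v y * hcancel + v' * hsq

lemma deriv_comp_abs_sub_eventuallyEq (g : ℝ → ℂ) {c s : ℝ} (h : s ≠ c) :
    deriv (fun t => g |t - c|) =ᶠ[𝓝 s] fun t => (SignType.sign (s - c) : ℝ) • deriv g |t - c| := by
  rcases h.lt_or_gt with hlt | hgt
  · filter_upwards [Iio_mem_nhds hlt] with t ht
    have hloc : (fun t' => g |t' - c|) =ᶠ[𝓝 t] fun t' => g (c - t') := by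
      filter_upwards [Iio_mem_nhds ht] with t' ht'
      rw [abs_of_neg (sub_neg.2 ht'), neg_sub]
    rw [hloc.deriv_eq, deriv_comp_const_sub, sign_neg (sub_neg.2 hlt),
      abs_of_neg (sub_neg.2 ht), neg_sub]
    simp
  · filter_upwards [Ioi_mem_nhds hgt] with t ht
    have hloc : (fun t' => g |t' - c|) =ᶠ[𝓝 t] fun t' => g (t' - c) := by
      filter_upwards [Ioi_mem_nhds ht] with t' ht'
      rw [abs_of_pos (sub_pos.2 ht')]
    rw [hloc.deriv_eq, deriv_comp_sub_const, sign_pos (sub_pos.2 hgt), abs_of_pos (sub_pos.2 ht)]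
    simp

lemma hasDerivAt_sign_smul_deriv_comp_abs_sub {g : ℝ → ℂ} {c s : ℝ} (h : s ≠ c)
    (hg : DifferentiableAt ℝ (deriv g) |s - c|) :
    HasDerivAt (fun t => (SignType.sign (s - c) : ℝ) • deriv g |t - c|)
      (deriv (deriv g) |s - c|) s := by
  have habs : HasDerivAt (fun t => |t - c|) (SignType.sign (s - c) : ℝ) s :=
    (hasDerivAt_abs (sub_ne_zero.2 h)).comp_sub_const s c
  refine ((hg.hasDerivAt.scomp s habs).const_smul (SignType.sign (s - c) : ℝ)).congr_deriv ?_
  rw [smul_smul]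
  rcases h.lt_or_gt with hlt | hgt
  · simp [sign_neg (sub_neg.2 hlt)]
  · simp [sign_pos (sub_pos.2 hgt)]

lemma sqrt_mul_deriv_sqrt_mul_deriv_comp_abs_sub {g : ℝ → ℂ} {c s : ℝ}
    (hs : s ∈ Ioo (-1 : ℝ) 1) (h : s ≠ c) (hg : DifferentiableAt ℝ (deriv g) |s - c|) :
    (√(1 - s ^ 2) : ℂ) * deriv (fun t => (√(1 - t ^ 2) : ℂ) * deriv (fun t => g |t - c|) t) s
      = (1 - (s : ℂ) ^ 2) * deriv (deriv g) |s - c|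
        - s * (SignType.sign (s - c) : ℝ) * deriv g |s - c| := by
  rw [sqrt_mul_deriv_sqrt_mul_deriv_of_eventuallyEq hs (deriv_comp_abs_sub_eventuallyEq g h)
    (hasDerivAt_sign_smul_deriv_comp_abs_sub h hg), Complex.real_smul, mul_assoc]

theorem helmholtz_commutator_kernel_identity_general (k : ℝ) (g : ℝ → ℂ)
    (hg' : ∀ r ∈ Ioi (0 : ℝ), DifferentiableAt ℝ (deriv g) r)
    (hbessel : ∀ r ∈ Ioi (0 : ℝ),
      deriv (deriv g) r + deriv g r / (r : ℂ) + (k : ℂ) ^ 2 * g r = 0) :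
    ∀ x ∈ Ioo (-1 : ℝ) 1, ∀ y ∈ Ioo (-1 : ℝ) 1, x ≠ y →
      (Real.sqrt (1 - y ^ 2) : ℂ) *
          deriv (fun s => (Real.sqrt (1 - s ^ 2) : ℂ) *
            deriv (fun t => g |x - t|) s) y
        - (Real.sqrt (1 - x ^ 2) : ℂ) *
          deriv (fun s => (Real.sqrt (1 - s ^ 2) : ℂ) *
            deriv (fun t => g |t - y|) s) x
      = (k : ℂ) ^ 2 * ((y : ℂ) ^ 2 - (x : ℂ) ^ 2) * g |x - y| := by
  intro x hx y hy hxy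
  have hr : 0 < |x - y| := abs_pos.2 (sub_ne_zero.2 hxy)
  have hyx : |y - x| = |x - y| := abs_sub_comm y x
  simp_rw [abs_sub_comm x]
  rw [sqrt_mul_deriv_sqrt_mul_deriv_comp_abs_sub hy hxy.symm (hyx ▸ hg' _ hr),
    sqrt_mul_deriv_sqrt_mul_deriv_comp_abs_sub hx hxy (hg' _ hr), hyx, ← neg_sub x y,
    Left.sign_neg]
  set r := |x - y|
  have hsign : ((SignType.sign (x - y) : ℝ) : ℂ) * r = x - y := by
    exact_mod_cast sign_mul_abs (x - y)
  have hbessel' : (r : ℂ) * deriv (deriv g) r + deriv g r + (k : ℂ) ^ 2 * r * g r = 0 := by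
    have hb := hbessel r hr
    have : (r : ℂ) ≠ 0 := by exact_mod_cast hr.ne'
    field_simp at hb
    linear_combination hb
  rw [SignType.coe_neg, Complex.ofReal_neg]
  linear_combination (x + y) * ((SignType.sign (x - y) : ℝ) : ℂ) * hbessel'
    - (x + y) * (deriv (deriv g) r + (k : ℂ) ^ 2 * g r) * hsign

/-- The heart of the commutation `S_{k,ω} [-(ω∂ₓ)² - k²ω²] = [-(ω∂ₓ)² - k²ω²] S_{k,ω}`:
for `G(t) = g(|t|)` with `g` a radial solution of the 2D Helmholtz equation, the
commutator kernel `(ω_y ∂_y)² G(x-y) - (ω_x ∂_x)² G(x-y)` equals `k²(y²-x²) G(x-y)`. -/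
theorem helmholtz_commutator_kernel_identity (k : ℝ) (g : ℝ → ℂ)
    (hg : ∀ r ∈ Ioi (0 : ℝ), DifferentiableAt ℝ g r)
    (hg' : ∀ r ∈ Ioi (0 : ℝ), DifferentiableAt ℝ (deriv g) r)
    (hbessel : ∀ r ∈ Ioi (0 : ℝ),
      deriv (deriv g) r + deriv g r / (r : ℂ) + (k : ℂ) ^ 2 * g r = 0) :
    ∀ x ∈ Ioo (-1 : ℝ) 1, ∀ y ∈ Ioo (-1 : ℝ) 1, x ≠ y →
      (Real.sqrt (1 - y ^ 2) : ℂ) *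
          deriv (fun s => (Real.sqrt (1 - s ^ 2) : ℂ) *
            deriv (fun t => g |x - t|) s) y
        - (Real.sqrt (1 - x ^ 2) : ℂ) *
          deriv (fun s => (Real.sqrt (1 - s ^ 2) : ℂ) *
            deriv (fun t => g |t - y|) s) x
      = (k : ℂ) ^ 2 * ((y : ℂ) ^ 2 - (x : ℂ) ^ 2) * g |x - y| :=
  helmholtz_commutator_kernel_identity_general k g hg' hbessel
end

section
/- For every natural number n, one has ln 2 ≤ 2·√(n²+1)·σₙ ≤ √2, where σ₀ = ln(2)/2 and σₙ = 1/(2n) for n ≥ 1. Consequently, for every finite Chebyshev expansion u = Σ_{n=0}^{N} cₙ·Tₙ, the function v := Σ_{n=0}^{N} 2·√(n²+1)·σₙ·cₙ·Tₙ satisfies (ln 2)²·Σ_{n=0}^{N} dₙ·cₙ² ≤ Σ_{n=0}^{N} dₙ·(2√(n²+1)·σₙ·cₙ)² ≤ 2·Σ_{n=0}^{N} dₙ·cₙ² for any nonnegative weights dₙ; in particular, measuring norms in L²_{1/ω}, the operator 2·P′₀·S_{0,ω} with P′₀ = √(−(ω∂ₓ)² + Id) satisfies ‖2·P′₀·S_{0,ω}·u‖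 ≤ √2·‖u‖ and ‖u‖ ≤ (1/ln 2)·‖2·P′₀·S_{0,ω}·u‖ for all such u. -/
/-!
Substituting `x = cos θ` turns the weight `dx/ω` into `dθ` on `[0, π]` and `Tₙ` into `cos nθ`,
so the `Tₙ` are orthogonal in `L²_{1/ω}` with `‖T₀‖² = 1` and `‖Tₙ‖² = 1/2` for `n ≥ 1`. In this
basis `2 P₀' S_{0,ω}` is diagonal with eigenvalues `λₙ = 2√(n²+1) σₙ`, namely `λ₀ = ln 2` and
`λₙ = √(1 + 1/n²) ∈ [1, √2]` for `n ≥ 1`. Bounds on `λₙ²` give the weighted coefficient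
inequalities, and with the weights `‖Tₙ‖²` these become the norm bounds by Parseval.
-/

open Real Set MeasureTheory intervalIntegral Finset

/-- The `n`-th Chebyshev polynomial of the first kind, as a real function. -/
noncomputable def chebT (n : ℕ) : ℝ → ℝ := fun x => (Polynomial.Chebyshev.T ℝ n).eval x

/-- The eigenvalues of the weighted Laplace single-layer operator:
`σ₀ = ln 2 / 2` and `σₙ = 1/(2n)` for `n ≥ 1`. -/
noncomputable def sigmaCheb : ℕ → ℝ := fun n =>
  if n = 0 then Real.log 2 / 2 else 1 / (2 * n)

/-- The `L²_{1/ω}` norm `‖f‖ = √((1/π) ∫ f²/√(1-x²))`. -/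
noncomputable def nrmOmega (f : ℝ → ℝ) : ℝ :=
  Real.sqrt ((1 / π) * ∫ x in (-1 : ℝ)..1, f x ^ 2 / Real.sqrt (1 - x ^ 2))

-- An identity of Bochner integrals: the Jacobian change of variables needs no integrability.
theorem integral_div_sqrt_one_sub_sq_eq_integral_comp_cos (f : ℝ → ℝ) :
    ∫ x in (-1 : ℝ)..1, f x / √(1 - x ^ 2) = ∫ θ in (0 : ℝ)..π, f (cos θ) := by
  have key := integral_image_eq_integral_abs_deriv_smul measurableSet_Icc
    (fun θ _ => (hasDerivAt_cos θ).hasDerivWithinAt) injOn_cos fun x => f x / √(1 - x ^ 2)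
  rw [bijOn_cos.image_eq] at key
  rw [integral_of_le (by norm_num), integral_of_le pi_pos.le, ← integral_Icc_eq_integral_Ioc,
    ← integral_Icc_eq_integral_Ioc, key, integral_Icc_eq_integral_Ioo,
    integral_Icc_eq_integral_Ioo]
  refine setIntegral_congr_fun measurableSet_Ioo fun θ hθ => ?_
  have hsin := sin_pos_of_pos_of_lt_pi hθ.1 hθ.2
  rw [← sin_eq_sqrt_one_sub_cos_sq hθ.1.le hθ.2.le, abs_neg, abs_of_pos hsin, smul_eq_mul,
    mul_div_cancel₀ _ hsin.ne']

theorem integral_cos_int_mul (k : ℤ) :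
    ∫ θ in (0 : ℝ)..π, cos (k * θ) = if k = 0 then π else 0 := by
  split_ifs with hk
  · simp [hk]
  · have hk' : (k : ℝ) ≠ 0 := Int.cast_ne_zero.mpr hk
    rw [integral_comp_mul_left (fun θ => cos θ) hk', integral_cos, mul_zero, sin_zero,
      sin_int_mul_pi, sub_zero, smul_zero]

/-- `‖Tₙ‖²` in `L²_{1/ω}`. -/
noncomputable def chebNormSq (n : ℕ) : ℝ := if n = 0 then 1 else 1 / 2

theorem chebNormSq_nonneg (n : ℕ) : 0 ≤ chebNormSq n := by
  unfold chebNormSq; split_ifs <;> norm_num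

theorem integral_cos_nat_mul_mul_cos_nat_mul (m n : ℕ) :
    ∫ θ in (0 : ℝ)..π, cos (m * θ) * cos (n * θ) = if m = n then π * chebNormSq n else 0 := by
  have hprod : ∀ θ : ℝ, cos (m * θ) * cos (n * θ)
      = (cos (((m + n : ℤ) : ℝ) * θ) + cos (((m - n : ℤ) : ℝ) * θ)) / 2 := fun θ => by
    push_cast
    rw [add_mul, sub_mul, cos_add, cos_sub]
    ring
  simp_rw [hprod]
  rw [intervalIntegral.integral_div, intervalIntegral.integral_add
    (Continuous.intervalIntegrable (by fun_prop) _ _)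
    (Continuous.intervalIntegrable (by fun_prop) _ _), integral_cos_int_mul, integral_cos_int_mul]
  rcases eq_or_ne m n with rfl | hmn
  · rcases eq_or_ne m 0 with rfl | hm
    · simp [chebNormSq]
    · simp [chebNormSq, hm]; ring
  · have hsub : (m - n : ℤ) ≠ 0 := sub_ne_zero.mpr (by exact_mod_cast hmn)
    have hadd : (m + n : ℤ) ≠ 0 := by omega
    simp [hmn, hsub, hadd]

theorem integral_sum_mul_cos_nat_mul_sq (s : Finset ℕ) (c : ℕ → ℝ) :
    ∫ θ in (0 : ℝ)..π, (∑ n ∈ s, c n * cos (n * θ)) ^ 2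
      = π * ∑ n ∈ s, chebNormSq n * c n ^ 2 := by
  have hexpand : ∀ θ : ℝ, (∑ n ∈ s, c n * cos (n * θ)) ^ 2
      = ∑ m ∈ s, ∑ n ∈ s, c m * c n * (cos (m * θ) * cos (n * θ)) := fun θ => by
    rw [sq, sum_mul_sum]
    exact sum_congr rfl fun m _ => sum_congr rfl fun n _ => by ring
  simp_rw [hexpand]
  rw [intervalIntegral.integral_finsetSum
    fun m _ => Continuous.intervalIntegrable (by fun_prop) _ _, mul_sum]
  refine sum_congr rfl fun m hm => ?_
  rw [intervalIntegral.integral_finsetSum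
    fun n _ => Continuous.intervalIntegrable (by fun_prop) _ _]
  simp_rw [intervalIntegral.integral_const_mul, integral_cos_nat_mul_mul_cos_nat_mul, mul_ite,
    mul_zero, sum_ite_eq, if_pos hm]
  ring

theorem chebT_cos (n : ℕ) (θ : ℝ) : chebT n (cos θ) = cos (n * θ) :=
  Polynomial.Chebyshev.T_real_cos θ n

theorem nrmOmega_sum_mul_chebT (s : Finset ℕ) (c : ℕ → ℝ) :
    nrmOmega (fun x => ∑ n ∈ s, c n * chebT n x) = √(∑ n ∈ s, chebNormSq n * c n ^ 2) := by
  simp_rw [nrmOmega, integral_div_sqrt_one_sub_sq_eq_integral_comp_cos, chebT_cos,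
    integral_sum_mul_cos_nat_mul_sq, ← mul_assoc, one_div_mul_cancel pi_ne_zero, one_mul]

section WeightedSum

variable {ι : Type*} {s : Finset ι} {d c μ : ι → ℝ}

theorem mul_sum_le_sum_mul_sq {A : ℝ} (hd : ∀ i ∈ s, 0 ≤ d i) (hA : ∀ i ∈ s, A ≤ μ i ^ 2) :
    A * ∑ i ∈ s, d i * c i ^ 2 ≤ ∑ i ∈ s, d i * (μ i * c i) ^ 2 := by
  rw [mul_sum]
  refine sum_le_sum fun i hi => ?_
  have hdc : 0 ≤ d i * c i ^ 2 := mul_nonneg (hd i hi) (sq_nonneg _)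
  calc A * (d i * c i ^ 2) ≤ μ i ^ 2 * (d i * c i ^ 2) :=
        mul_le_mul_of_nonneg_right (hA i hi) hdc
    _ = d i * (μ i * c i) ^ 2 := by ring

theorem sum_mul_sq_le_mul_sum {B : ℝ} (hd : ∀ i ∈ s, 0 ≤ d i) (hB : ∀ i ∈ s, μ i ^ 2 ≤ B) :
    ∑ i ∈ s, d i * (μ i * c i) ^ 2 ≤ B * ∑ i ∈ s, d i * c i ^ 2 := by
  rw [mul_sum]
  refine sum_le_sum fun i hi => ?_
  have hdc : 0 ≤ d i * c i ^ 2 := mul_nonneg (hd i hi) (sq_nonneg _)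
  calc d i * (μ i * c i) ^ 2 = μ i ^ 2 * (d i * c i ^ 2) := by ring
    _ ≤ B * (d i * c i ^ 2) := mul_le_mul_of_nonneg_right (hB i hi) hdc

end WeightedSum

/-- The eigenvalue of `2 P₀' S_{0,ω}` on `Tₙ`. -/
noncomputable def precondEigenvalue (n : ℕ) : ℝ := 2 * √((n : ℝ) ^ 2 + 1) * sigmaCheb n

theorem precondEigenvalue_zero : precondEigenvalue 0 = log 2 := by
  simp [precondEigenvalue, sigmaCheb, mul_div_cancel₀]

theorem precondEigenvalue_of_ne_zero {n : ℕ} (hn : n ≠ 0) :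
    precondEigenvalue n = √(1 + 1 / (n : ℝ) ^ 2) := by
  have hpos : (0 : ℝ) < n := by positivity
  rw [precondEigenvalue, sigmaCheb, if_neg hn, one_add_div (by positivity),
    sqrt_div' _ (sq_nonneg _), sqrt_sq hpos.le, add_comm]
  field_simp

theorem log_two_le_one : log 2 ≤ 1 := by linarith [log_two_lt_d9]

theorem log_two_le_precondEigenvalue (n : ℕ) : log 2 ≤ precondEigenvalue n := by
  rcases eq_or_ne n 0 with rfl | hn
  · exact precondEigenvalue_zero.ge
  · rw [precondEigenvalue_of_ne_zero hn]
    exact log_two_le_one.trans (one_le_sqrt.mpr (le_add_of_nonneg_right (by positivity)))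

theorem precondEigenvalue_le_sqrt_two (n : ℕ) : precondEigenvalue n ≤ √2 := by
  rcases eq_or_ne n 0 with rfl | hn
  · rw [precondEigenvalue_zero]
    exact log_two_le_one.trans (one_le_sqrt.mpr one_le_two)
  · have hn1 : (1 : ℝ) ≤ (n : ℝ) ^ 2 :=
      one_le_pow₀ (by exact_mod_cast Nat.one_le_iff_ne_zero.mpr hn)
    rw [precondEigenvalue_of_ne_zero hn]
    exact sqrt_le_sqrt (by linarith [div_le_one_of_le₀ hn1 (sq_nonneg _)])

theorem log_two_sq_le_precondEigenvalue_sq (n : ℕ) : log 2 ^ 2 ≤ precondEigenvalue n ^ 2 :=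
  pow_le_pow_left₀ (log_pos one_lt_two).le (log_two_le_precondEigenvalue n) 2

theorem precondEigenvalue_sq_le_two (n : ℕ) : precondEigenvalue n ^ 2 ≤ 2 :=
  (pow_le_pow_left₀ ((log_pos one_lt_two).le.trans (log_two_le_precondEigenvalue n))
    (precondEigenvalue_le_sqrt_two n) 2).trans_eq (sq_sqrt zero_le_two)

/-- Spectral equivalence of the zero-frequency square-root preconditioner
`P₀' = √(-(ω∂ₓ)² + Id)` with the inverse of the weighted single-layer operator:
`ln 2 ≤ 2√(n²+1) σₙ ≤ √2`, the corresponding weighted-coefficient inequalities,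
and the resulting norm bounds `‖2P₀'S_{0,ω}u‖ ≤ √2 ‖u‖` and
`‖u‖ ≤ (1/ln 2) ‖2P₀'S_{0,ω}u‖` for finite Chebyshev expansions `u`. -/
theorem spectral_equivalence_P0 :
    (∀ n : ℕ, Real.log 2 ≤ 2 * Real.sqrt ((n : ℝ) ^ 2 + 1) * sigmaCheb n ∧
        2 * Real.sqrt ((n : ℝ) ^ 2 + 1) * sigmaCheb n ≤ Real.sqrt 2) ∧
    (∀ (N : ℕ) (c d : ℕ → ℝ), (∀ n, 0 ≤ d n) →
      Real.log 2 ^ 2 * ∑ n ∈ Finset.range (N + 1), d n * c n ^ 2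
          ≤ ∑ n ∈ Finset.range (N + 1),
              d n * (2 * Real.sqrt ((n : ℝ) ^ 2 + 1) * sigmaCheb n * c n) ^ 2 ∧
        ∑ n ∈ Finset.range (N + 1),
            d n * (2 * Real.sqrt ((n : ℝ) ^ 2 + 1) * sigmaCheb n * c n) ^ 2
          ≤ 2 * ∑ n ∈ Finset.range (N + 1), d n * c n ^ 2) ∧
    (∀ (N : ℕ) (c : ℕ → ℝ),
      nrmOmega (fun x => ∑ n ∈ Finset.range (N + 1),
            2 * Real.sqrt ((n : ℝ) ^ 2 + 1) * sigmaCheb n * c n * chebT n x)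
          ≤ Real.sqrt 2 *
            nrmOmega (fun x => ∑ n ∈ Finset.range (N + 1), c n * chebT n x) ∧
        nrmOmega (fun x => ∑ n ∈ Finset.range (N + 1), c n * chebT n x)
          ≤ (1 / Real.log 2) *
            nrmOmega (fun x => ∑ n ∈ Finset.range (N + 1),
              2 * Real.sqrt ((n : ℝ) ^ 2 + 1) * sigmaCheb n * c n * chebT n x)) := by
  have hlog : 0 < log 2 := log_pos one_lt_two
  have hcoef (N : ℕ) (c d : ℕ → ℝ) (hd : ∀ n, 0 ≤ d n) :
      log 2 ^ 2 * ∑ n ∈ range (N + 1), d n * c n ^ 2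
          ≤ ∑ n ∈ range (N + 1), d n * (precondEigenvalue n * c n) ^ 2 ∧
        ∑ n ∈ range (N + 1), d n * (precondEigenvalue n * c n) ^ 2
          ≤ 2 * ∑ n ∈ range (N + 1), d n * c n ^ 2 :=
    ⟨mul_sum_le_sum_mul_sq (fun n _ => hd n) fun n _ => log_two_sq_le_precondEigenvalue_sq n,
      sum_mul_sq_le_mul_sum (fun n _ => hd n) fun n _ => precondEigenvalue_sq_le_two n⟩
  refine ⟨fun n => ⟨log_two_le_precondEigenvalue n, precondEigenvalue_le_sqrt_two n⟩, hcoef,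
    fun N c => ?_⟩
  obtain ⟨hlower, hupper⟩ := hcoef N c chebNormSq chebNormSq_nonneg
  rw [nrmOmega_sum_mul_chebT, nrmOmega_sum_mul_chebT, one_div, le_inv_mul_iff₀ hlog,
    ← sqrt_mul zero_le_two, ← sqrt_sq hlog.le, ← sqrt_mul (sq_nonneg _)]
  exact ⟨sqrt_le_sqrt hupper, sqrt_le_sqrt hlower⟩
end
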